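/- arXiv:2001.06662 — 4 statements merged into one kernel-verified Lean document; each statement's English description precedes it below -/
import Mathlib

section
/- Let I and J be k-subsets of [n], each of which is a disjoint union of exactly l intervals (an l-ple interval), with |I| = |J| = k ≥ l. Then I and J are l-intertwining if and only if the set of left endpoints of the intervals of I intertwines the set of left endpoints of the intervals of J, and the set of right endpoints of the intervals of I intertwines the set of right endpoints of the intervals of J. -/
/-- Two finite sets of naturals intertwine: they have the same cardinality `l` and their
sorted elements satisfy `a₁ < b₁ < a₂ < b₂ < ⋯ < a_l < b_l`. -/
def NatIntertwines (A B : Finset ℕ) : Prop :=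
  A.card = B.card ∧
    List.Chain' (· < ·)
      (((A.sort (· ≤ ·)).zip (B.sort (· ≤ ·))).flatMap fun p => [p.1, p.2])

/-- `S` is the `l`-ple interval `[t 0, t' 0] ⊔ ⋯ ⊔ [t (l-1), t' (l-1)]` with left endpoints
`t` and right endpoints `t'`; consecutive intervals are separated by a gap. -/
def IsLpleInterval (l : ℕ) (t t' : Fin l → ℕ) (S : Finset ℕ) : Prop :=
  (∀ j, t j ≤ t' j) ∧
    (∀ (j : ℕ) (h : j + 1 < l), t' ⟨j, by omega⟩ + 2 ≤ t ⟨j + 1, h⟩) ∧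
    S = Finset.univ.biUnion fun j => Finset.Icc (t j) (t' j)

/-- `I` and `J` are `l`-intertwining: there are `l`-subsets `I' ⊆ I`, `J' ⊆ J` with
`I' ∩ J = ∅ = I ∩ J'` such that `I'` intertwines `J'` in one of the two orders. -/
def LIntertwines (l : ℕ) (I J : Finset ℕ) : Prop :=
  ∃ I' J' : Finset ℕ, I' ⊆ I ∧ J' ⊆ J ∧ Disjoint I' J ∧ Disjoint I J' ∧
    I'.card = l ∧ J'.card = l ∧ (NatIntertwines I' J' ∨ NatIntertwines J' I')

/-!
Both sides speak about interlaced sequences `a 0 < b 0 < a 1 < ⋯`. If `a` in `I \ J` and `b` in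
`J \ I` interlace, consecutive `a`'s are separated by a point outside `I`, so `a i` lies in the
`i`-th interval of `I`; likewise `b i` lies in the `i`-th interval of `J`. A failure of
interlacing of the endpoints would then put some `a i` into `J` or some `b i` into `I`.
Conversely, when the endpoints interlace, witnesses can be picked in the gaps of the other set.
Endpoints interlacing in opposite orders on the left and on the right would nest every interval
of one set strictly inside the matching interval of the other, contradicting `|I| = |J|`.
-/

/-- `a 0 < b 0 < a 1 < b 1 < ⋯`, stated without index arithmetic. -/
def Interlaced {α : Type*} [Preorder α] {l : ℕ} (a b : Fin l → α) : Prop :=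
  (∀ i j, i ≤ j → a i < b j) ∧ ∀ i j, i < j → b i < a j

namespace Interlaced

variable {α : Type*} [Preorder α] {l : ℕ} {a b : Fin l → α}

theorem apply_lt (h : Interlaced a b) (i : Fin l) : a i < b i :=
  h.1 i i le_rfl

theorem strictMono_left (h : Interlaced a b) : StrictMono a :=
  fun i j hij => (h.apply_lt i).trans (h.2 i j hij)

theorem strictMono_right (h : Interlaced a b) : StrictMono b :=
  fun i j hij => (h.2 i j hij).trans (h.apply_lt j)

end Interlaced

theorem pairwise_flatMap_ofFn_iff_interlaced {α : Type*} [Preorder α] {l : ℕ} {a b : Fin l → α} :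
    ((List.ofFn fun i => (a i, b i)).flatMap fun p => [p.1, p.2]).Pairwise (· < ·) ↔
      Interlaced a b := by
  simp only [List.pairwise_flatMap, List.pairwise_ofFn, List.forall_mem_ofFn_iff,
    List.pairwise_pair, List.mem_pair, forall_eq_or_imp, forall_eq]
  constructor
  · rintro ⟨hab, hlt⟩
    refine ⟨fun i j hij => ?_, fun i j hij => (hlt hij).2.1⟩
    obtain rfl | hij := hij.eq_or_lt
    exacts [hab i, (hlt hij).1.2]
  · intro h
    exact ⟨h.apply_lt, fun i j hij => ⟨⟨h.strictMono_left hij, h.1 i j hij.le⟩,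
      h.2 i j hij, h.strictMono_right hij⟩⟩

theorem natIntertwines_iff_interlaced {A B : Finset ℕ} {l : ℕ} (hA : A.card = l)
    (hB : B.card = l) :
    NatIntertwines A B ↔ Interlaced (A.orderEmbOfFin hA) (B.orderEmbOfFin hB) := by
  rw [NatIntertwines, ← Finset.listMap_orderEmbOfFin_finRange A hA,
    ← Finset.listMap_orderEmbOfFin_finRange B hB, List.zip_map', ← List.ofFn_eq_map,
    List.Chain', List.isChain_iff_pairwise, pairwise_flatMap_ofFn_iff_interlaced, hA, hB,
    eq_self, true_and]

theorem natIntertwines_image_iff {l : ℕ} {a b : Fin l → ℕ} (ha : StrictMono a)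
    (hb : StrictMono b) :
    NatIntertwines (Finset.univ.image a) (Finset.univ.image b) ↔ Interlaced a b := by
  have hA : (Finset.univ.image a).card = l := by
    rw [Finset.card_image_of_injective _ ha.injective, Finset.card_fin]
  have hB : (Finset.univ.image b).card = l := by
    rw [Finset.card_image_of_injective _ hb.injective, Finset.card_fin]
  rw [natIntertwines_iff_interlaced hA hB,
    ← Finset.orderEmbOfFin_unique hA (fun i => Finset.mem_image_of_mem a (Finset.mem_univ i)) ha,
    ← Finset.orderEmbOfFin_unique hB (fun i => Finset.mem_image_of_mem b (Finset.mem_univ i)) hb]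

theorem lIntertwines_iff_exists_interlaced {l : ℕ} {I J : Finset ℕ} :
    LIntertwines l I J ↔ ∃ a b : Fin l → ℕ, (∀ i, a i ∈ I \ J) ∧ (∀ i, b i ∈ J \ I) ∧
      (Interlaced a b ∨ Interlaced b a) := by
  constructor
  · rintro ⟨I', J', hI', hJ', hI'J, hIJ', hI'c, hJ'c, h⟩
    refine ⟨I'.orderEmbOfFin hI'c, J'.orderEmbOfFin hJ'c, fun i => ?_, fun i => ?_, ?_⟩
    · have hi := I'.orderEmbOfFin_mem hI'c i
      exact Finset.mem_sdiff.2 ⟨hI' hi, Finset.disjoint_left.1 hI'J hi⟩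
    · have hi := J'.orderEmbOfFin_mem hJ'c i
      exact Finset.mem_sdiff.2 ⟨hJ' hi, Finset.disjoint_right.1 hIJ' hi⟩
    · rwa [← natIntertwines_iff_interlaced, ← natIntertwines_iff_interlaced]
  · rintro ⟨a, b, ha, hb, h⟩
    have hamono : StrictMono a := h.elim Interlaced.strictMono_left Interlaced.strictMono_right
    have hbmono : StrictMono b := h.elim Interlaced.strictMono_right Interlaced.strictMono_left
    simp only [Finset.mem_sdiff] at ha hb
    refine ⟨Finset.univ.image a, Finset.univ.image b, ?_, ?_, ?_, ?_, ?_, ?_, ?_⟩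
    · exact Finset.image_subset_iff.2 fun i _ => (ha i).1
    · exact Finset.image_subset_iff.2 fun i _ => (hb i).1
    · simpa [Finset.disjoint_left] using fun i => (ha i).2
    · simpa [Finset.disjoint_right] using fun i => (hb i).2
    · rw [Finset.card_image_of_injective _ hamono.injective, Finset.card_fin]
    · rw [Finset.card_image_of_injective _ hbmono.injective, Finset.card_fin]
    · rwa [natIntertwines_image_iff hamono hbmono, natIntertwines_image_iff hbmono hamono]

namespace IsLpleInterval

variable {l : ℕ} {t t' s s' : Fin l → ℕ} {S I J : Finset ℕ}

theorem add_two_le (h : IsLpleInterval l t t' S) {i j : Fin l} (hij : i < j) :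
    t' i + 2 ≤ t j := by
  obtain ⟨i, hi⟩ := i
  obtain ⟨j, hj⟩ := j
  induction j, Fin.mk_lt_mk.1 hij using Nat.le_induction with
  | base => exact h.2.1 i hj
  | succ j hle ih =>
    have := ih (by omega) (Fin.mk_lt_mk.2 hle)
    have := h.1 ⟨j, by omega⟩
    have := h.2.1 j hj
    omega

theorem strictMono_left (h : IsLpleInterval l t t' S) : StrictMono t := fun i j hij => by
  have := h.add_two_le hij
  have := h.1 i
  omega

theorem strictMono_right (h : IsLpleInterval l t t' S) : StrictMono t' := fun i j hij => by
  have := h.add_two_le hij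
  have := h.1 j
  omega

theorem mem_iff (h : IsLpleInterval l t t' S) {x : ℕ} : x ∈ S ↔ ∃ i, t i ≤ x ∧ x ≤ t' i := by
  simp [h.2.2]

theorem card_eq_sum (h : IsLpleInterval l t t' S) : S.card = ∑ i, (t' i + 1 - t i) := by
  rw [h.2.2, Finset.card_biUnion]
  · simp
  · intro i _ j _ hij
    rw [Function.onFun, Finset.disjoint_left]
    intro x hxi hxj
    rw [Finset.mem_Icc] at hxi hxj
    rcases hij.lt_or_gt with hij | hij
    · have := h.add_two_le hij; omega
    · have := h.add_two_le hij; omega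

theorem card_lt_card [Nonempty (Fin l)] (hI : IsLpleInterval l t t' I)
    (hJ : IsLpleInterval l s s' J) (hs : ∀ i, t i < s i) (hs' : ∀ i, s' i < t' i) :
    J.card < I.card := by
  rw [hI.card_eq_sum, hJ.card_eq_sum]
  refine Finset.sum_lt_sum_of_nonempty Finset.univ_nonempty fun i _ => ?_
  have := hs i
  have := hs' i
  have := hJ.1 i
  omega

theorem mem_Icc_of_separated (h : IsLpleInterval l t t' S) {c : Fin l → ℕ} (hc : ∀ i, c i ∈ S)
    (hsep : ∀ i j, i < j → ∃ x ∉ S, c i < x ∧ x < c j) (i : Fin l) :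
    t i ≤ c i ∧ c i ≤ t' i := by
  choose m hm using fun i => h.mem_iff.1 (hc i)
  have hm_mono : StrictMono m := by
    intro i j hij
    obtain ⟨x, hxS, hix, hxj⟩ := hsep i j hij
    by_contra! hji
    obtain hji | hji := hji.lt_or_eq
    · have := h.add_two_le hji
      have := hm i
      have := hm j
      omega
    · refine hxS (h.mem_iff.2 ⟨m i, ?_, ?_⟩)
      · have := hm i; omega
      · have := hm j; rw [hji] at this; omega
  have hm_id : m i = i := le_antisymm hm_mono.apply_le hm_mono.le_apply
  simpa only [hm_id] using hm i

theorem interlaced_endpoints (hI : IsLpleInterval l t t' I) (hJ : IsLpleInterval l s s' J)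
    {a b : Fin l → ℕ} (ha : ∀ i, a i ∈ I \ J) (hb : ∀ i, b i ∈ J \ I) (hab : Interlaced a b) :
    Interlaced t s ∧ Interlaced t' s' := by
  simp only [Finset.mem_sdiff] at ha hb
  have hat := hI.mem_Icc_of_separated (fun i => (ha i).1) fun i j hij =>
    ⟨b i, (hb i).2, hab.apply_lt i, hab.2 i j hij⟩
  have hbs := hJ.mem_Icc_of_separated (fun i => (hb i).1) fun i j hij =>
    ⟨a j, (ha j).2, hab.2 i j hij, hab.apply_lt j⟩
  refine ⟨⟨fun i j hij => ?_, fun i j hij => ?_⟩, ⟨fun i j hij => ?_, fun i j hij => ?_⟩⟩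
  · by_contra! h
    refine (ha i).2 (hJ.mem_iff.2 ⟨j, ?_, ?_⟩)
    · have := hat i; omega
    · have := hab.1 i j hij; have := hbs j; omega
  · by_contra! h
    refine (hb i).2 (hI.mem_iff.2 ⟨j, ?_, ?_⟩)
    · have := hbs i; omega
    · have := hab.2 i j hij; have := hat j; omega
  · by_contra! h
    refine (hb j).2 (hI.mem_iff.2 ⟨i, ?_, ?_⟩)
    · have := hab.1 i j hij; have := hat i; omega
    · have := hbs j; omega
  · by_contra! h
    refine (ha j).2 (hJ.mem_iff.2 ⟨i, ?_, ?_⟩)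
    · have := hab.2 i j hij; have := hbs i; omega
    · have := hat j; omega

theorem exists_interlaced (hI : IsLpleInterval l t t' I) (hJ : IsLpleInterval l s s' J)
    (hts : Interlaced t s) (hts' : Interlaced t' s') :
    ∃ a b : Fin l → ℕ, (∀ i, a i ∈ I \ J) ∧ (∀ i, b i ∈ J \ I) ∧ Interlaced a b := by
  -- `a i` lies in the `i`-th interval of `I` and in the gap of `J` before `s i`;
  -- `b i` lies in the `i`-th interval of `J` and in the gap of `I` after `t' i`.
  refine ⟨fun i => min (t' i) (s i - 1), fun i => max (s i) (t' i + 1),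
    fun i => Finset.mem_sdiff.2 ⟨?_, ?_⟩, fun i => Finset.mem_sdiff.2 ⟨?_, ?_⟩, ?_, ?_⟩
  all_goals beta_reduce
  · have := hI.1 i
    have := hts.apply_lt i
    exact hI.mem_iff.2 ⟨i, by omega, by omega⟩
  · rw [hJ.mem_iff]
    rintro ⟨j, hj, hj'⟩
    obtain hji | hij := lt_or_ge j i
    · have := hts'.2 j i hji
      have := hJ.add_two_le hji
      omega
    · have := hJ.strictMono_left.monotone hij
      have := hts.apply_lt i
      omega
  · have := hJ.1 i
    have := hts'.apply_lt i
    exact hJ.mem_iff.2 ⟨i, by omega, by omega⟩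
  · rw [hI.mem_iff]
    rintro ⟨j, hj, hj'⟩
    obtain hji | hij := le_or_gt j i
    · have := hI.strictMono_right.monotone hji
      omega
    · have := hts.2 i j hij
      have := hI.add_two_le hij
      omega
  · intro i j hij
    have := hts.apply_lt i
    have := hJ.strictMono_left.monotone hij
    omega
  · intro i j hij
    have := hts.2 i j hij
    have := hts'.apply_lt i
    have := hI.1 j
    have := hJ.1 i
    have := hI.add_two_le hij
    have := hJ.add_two_le hij
    omega

end IsLpleInterval

theorem lple_intervals_lIntertwine_iff_endpoints_general
    (k l : ℕ) (hl : 1 ≤ l)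
    (I J : Finset ℕ)
    (hIc : I.card = k) (hJc : J.card = k)
    (t t' s s' : Fin l → ℕ)
    (hIint : IsLpleInterval l t t' I) (hJint : IsLpleInterval l s s' J) :
    LIntertwines l I J ↔
      ((NatIntertwines (Finset.univ.image t) (Finset.univ.image s) ∨
        NatIntertwines (Finset.univ.image s) (Finset.univ.image t)) ∧
       (NatIntertwines (Finset.univ.image t') (Finset.univ.image s') ∨
        NatIntertwines (Finset.univ.image s') (Finset.univ.image t'))) := by
  have ht := hIint.strictMono_left
  have ht' := hIint.strictMono_right
  have hs := hJint.strictMono_left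
  have hs' := hJint.strictMono_right
  rw [lIntertwines_iff_exists_interlaced, natIntertwines_image_iff ht hs,
    natIntertwines_image_iff hs ht, natIntertwines_image_iff ht' hs',
    natIntertwines_image_iff hs' ht']
  have : Nonempty (Fin l) := ⟨⟨0, hl⟩⟩
  constructor
  · rintro ⟨a, b, ha, hb, hab | hba⟩
    · exact (hIint.interlaced_endpoints hJint ha hb hab).imp Or.inl Or.inl
    · exact (hJint.interlaced_endpoints hIint hb ha hba).imp Or.inr Or.inr
  · rintro ⟨hts | hst, hts' | hst'⟩
    · obtain ⟨a, b, ha, hb, hab⟩ := hIint.exists_interlaced hJint hts hts'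
      exact ⟨a, b, ha, hb, Or.inl hab⟩
    · exact absurd (hIc.trans hJc.symm)
        (hIint.card_lt_card hJint hts.apply_lt hst'.apply_lt).ne'
    · exact absurd (hJc.trans hIc.symm)
        (hJint.card_lt_card hIint hst.apply_lt hts'.apply_lt).ne'
    · obtain ⟨b, a, hb, ha, hba⟩ := hJint.exists_interlaced hIint hst hst'
      exact ⟨a, b, ha, hb, Or.inr hba⟩

/-- Two `l`-ple interval `k`-subsets of `[n]` are `l`-intertwining iff their left endpoint
sets intertwine and their right endpoint sets intertwine. -/
theorem lple_intervals_lIntertwine_iff_endpoints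
    (n k l : ℕ) (hl : 1 ≤ l) (hlk : l ≤ k)
    (I J : Finset ℕ) (hI : I ⊆ Finset.Icc 1 n) (hJ : J ⊆ Finset.Icc 1 n)
    (hIc : I.card = k) (hJc : J.card = k)
    (t t' s s' : Fin l → ℕ)
    (hIint : IsLpleInterval l t t' I) (hJint : IsLpleInterval l s s' J) :
    LIntertwines l I J ↔
      ((NatIntertwines (Finset.univ.image t) (Finset.univ.image s) ∨
        NatIntertwines (Finset.univ.image s) (Finset.univ.image t)) ∧
       (NatIntertwines (Finset.univ.image t') (Finset.univ.image s') ∨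
        NatIntertwines (Finset.univ.image s') (Finset.univ.image t'))) :=
  lple_intervals_lIntertwine_iff_endpoints_general k l hl I J hIc hJc t t' s s' hIint hJint
end

section
/- Let 𝒯 be a slice: a non-intertwining collection of binomial(n-l-1, l-1) l-subsets of [n] (each with cyclic gaps at least 2) such that for some i the gap-vector map φ_i gives a bijection from 𝒯 onto the set of l-tuples of nonnegative integers summing to n - 2l. For l ≤ k ≤ n-l, define C_k(𝒯) to be the set of k-subsets of [n] that are l-ple intervals whose set of left endpoints lies in 𝒯. Then |C_k(𝒯)| = binomial(k-1, l-1) · binomial(n-k-1, l-1). -/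
/-!
A set `S` with `leftEnd S = T` is the union of one interval starting at each point of `T`;
if `g = φᵢ(T)` is the gap vector of `T`, the interval at the `j`-th point has length
`μ j + 1` for some `μ j ≤ g j`, and `|S| = l + ∑ μ`. So the sets of `C_k(𝒯)` lying over `T`
correspond to the tuples `μ ≤ g` summing to `k - l`. As `φᵢ` maps the slice bijectively onto
the tuples summing to `n - 2l`, `|C_k(𝒯)|` counts the pairs `μ ≤ g`, i.e. the pairs
`(μ, g - μ)` of tuples summing to `k - l` and `n - k - l`; stars and bars counts each factor.
-/

/-- The position of `x` in the cyclic order on `ℤ/n` starting at `i`. -/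
def ord {n : ℕ} (i x : ZMod n) : ℕ := (x - i).val

/-- Two finite subsets of `ℤ/n` intertwine under some cyclic ordering of `[n]`. -/
def CycIntertwines {n : ℕ} (A B : Finset (ZMod n)) : Prop :=
  ∃ i : ZMod n, NatIntertwines (A.image (ord i)) (B.image (ord i))

/-- Two subsets `I`, `J` of `ℤ/n` are (cyclically) `l`-intertwining: there are
`l`-subsets `I' ⊆ I \ J` and `J' ⊆ J \ I` which intertwine (in either order) under some
cyclic ordering. -/
def CycLIntertwines {n : ℕ} (l : ℕ) (I J : Finset (ZMod n)) : Prop :=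
  ∃ I' J' : Finset (ZMod n), I' ⊆ I \ J ∧ J' ⊆ J \ I ∧ I'.card = l ∧ J'.card = l ∧
    (CycIntertwines I' J' ∨ CycIntertwines J' I')

/-- The set of left endpoints of `S ⊆ ℤ/n`: elements of `S` whose predecessor is not
in `S`. -/
def leftEnd {n : ℕ} (S : Finset (ZMod n)) : Finset (ZMod n) :=
  S.filter fun x => x - 1 ∉ S

/-- The gap vector of a sorted list of positions: consecutive differences minus 2,
cyclically (arithmetic modulo `n`). -/
def phiList (n : ℕ) (L : List ℕ) : List ℕ :=
  (L.zip (L.rotate 1)).map fun p => (p.2 + n - p.1 - 2) % n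

/-- The map `φᵢ` of Definition 3.4: the gap vector of an `l`-subset of `ℤ/n`, listed in
the cyclic order starting at `i`. -/
def phi {n : ℕ} (i : ZMod n) (T : Finset (ZMod n)) : List ℕ :=
  phiList n ((T.image (ord i)).sort (· ≤ ·))

/-- A slice: a non-intertwining collection of `C(n-l-1, l-1)` `l`-subsets of `ℤ/n`, each
with cyclic gaps at least 2, such that for some `i` the gap-vector map `φᵢ` is a bijection
onto the `l`-tuples of nonnegative integers summing to `n - 2l`. -/
def IsSlice (n l : ℕ) (𝒯 : Finset (Finset (ZMod n))) : Prop :=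
  𝒯.card = (n - l - 1).choose (l - 1) ∧
    (∀ T ∈ 𝒯, T.card = l) ∧
    (∀ T ∈ 𝒯, ∀ x ∈ T, x + 1 ∉ T) ∧
    (∀ T ∈ 𝒯, ∀ T' ∈ 𝒯, ¬ CycIntertwines T T') ∧
    ∃ i : ZMod n, Set.BijOn (phi i) ↑𝒯
      {L : List ℕ | L.length = l ∧ L.sum = n - 2 * l}

/-- `C_k(𝒯)`: the `k`-subsets of `ℤ/n` which are `l`-ple intervals whose set of left
endpoints belongs to `𝒯`. -/
def Ck (n k : ℕ) (𝒯 : Finset (Finset (ZMod n))) : Set (Finset (ZMod n)) :=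
  {S : Finset (ZMod n) | S.card = k ∧ leftEnd S ∈ 𝒯}

open Finset

section Counting

lemma card_antidiagonalTuple {l : ℕ} (hl : 0 < l) (m : ℕ) :
    #(Nat.antidiagonalTuple l m) = (m + l - 1).choose (l - 1) := by
  rw [← piAntidiag_univ_fin_eq_antidiagonalTuple, ← map_sym_eq_piAntidiag, card_map, sym_univ,
    card_univ, Sym.card_sym_eq_choose, Fintype.card_fin, add_comm l m]
  exact Nat.choose_symm_of_eq_add (by omega)

lemma card_filter_le_antidiagonalTuple {l a b : ℕ} {μ : Fin l → ℕ}
    (hμ : μ ∈ Nat.antidiagonalTuple l a) :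
    #{L ∈ Nat.antidiagonalTuple l (a + b) | ∀ j, μ j ≤ L j} = #(Nat.antidiagonalTuple l b) := by
  rw [Nat.mem_antidiagonalTuple] at hμ
  refine card_nbij' (· - μ) (· + μ) (fun L hL => ?_) (fun ν hν => ?_) (fun L hL => ?_)
    (fun ν _ => add_tsub_cancel_right ν μ)
  · simp only [coe_filter, Set.mem_ofPred_eq, Nat.mem_antidiagonalTuple] at hL
    simp only [mem_coe, Nat.mem_antidiagonalTuple, Pi.sub_apply]
    rw [sum_tsub_distrib _ fun j _ => hL.2 j]
    omega
  · simp only [mem_coe, Nat.mem_antidiagonalTuple] at hν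
    simp only [coe_filter, Set.mem_ofPred_eq, Nat.mem_antidiagonalTuple, Pi.add_apply,
      sum_add_distrib, hν, hμ, add_comm b a, true_and]
    exact fun j => Nat.le_add_left _ _
  · simp only [coe_filter, Set.mem_ofPred_eq] at hL
    exact tsub_add_cancel_of_le hL.2

/-- Double counting the pairs `μ ≤ L`: given `μ`, the tuple `L - μ` is arbitrary. -/
lemma sum_card_filter_le_antidiagonalTuple (l a b : ℕ) :
    ∑ L ∈ Nat.antidiagonalTuple l (a + b), #{μ ∈ Nat.antidiagonalTuple l a | ∀ j, μ j ≤ L j} =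
      #(Nat.antidiagonalTuple l a) * #(Nat.antidiagonalTuple l b) := by
  simp only [card_filter]
  rw [sum_comm, card_eq_sum_ones, sum_mul]
  refine sum_congr rfl fun μ hμ => ?_
  rw [← card_filter, card_filter_le_antidiagonalTuple hμ, one_mul]

end Counting

section Blocks

variable {l : ℕ}

/-- The position of the `j`-th point of a cyclic `l`-subset with gap vector `g`, counted from
its first point. -/
def blockStart (g : Fin l → ℕ) (j : ℕ) : ℕ := ∑ i : Fin l with i.val < j, (g i + 2)

def blocks (g μ : Fin l → ℕ) : Finset ℕ :=
  univ.biUnion fun j : Fin l => Icc (blockStart g j) (blockStart g j + μ j)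

/-- `leftEnd` for sets of naturals; `0` needs its own case since `0 - 1 = 0` in `ℕ`. -/
def leftEndNat (P : Finset ℕ) : Finset ℕ := P.filter fun a => a = 0 ∨ a - 1 ∉ P

variable {g μ : Fin l → ℕ}

lemma blockStart_zero : blockStart g 0 = 0 := by simp [blockStart]

lemma blockStart_succ (j : Fin l) : blockStart g (j + 1) = blockStart g j + (g j + 2) := by
  have : univ.filter (fun i : Fin l => i.val < j + 1) =
      insert j (univ.filter fun i : Fin l => i.val < j) := by
    ext i
    simp only [mem_filter, mem_univ, true_and, mem_insert, Fin.ext_iff]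
    omega
  rw [blockStart, blockStart, this, sum_insert (by simp), add_comm]

lemma blockStart_mono (g : Fin l → ℕ) : Monotone (blockStart g) := fun _ _ h =>
  sum_le_sum_of_subset fun i => by simp only [mem_filter, mem_univ, true_and]; omega

lemma blockStart_length (g : Fin l → ℕ) : blockStart g l = ∑ j, g j + 2 * l := by
  simp [blockStart, sum_add_distrib, mul_comm]

lemma blockStart_add_le_of_lt {j j' : Fin l} (h : j < j') :
    blockStart g j + (g j + 2) ≤ blockStart g j' :=
  blockStart_succ (g := g) j ▸ blockStart_mono g (Fin.lt_def.mp h)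

lemma blockStart_add_le (j : Fin l) : blockStart g j + (g j + 2) ≤ blockStart g l :=
  blockStart_succ (g := g) j ▸ blockStart_mono g j.isLt

lemma mem_blocks {a : ℕ} :
    a ∈ blocks g μ ↔ ∃ j : Fin l, blockStart g j ≤ a ∧ a ≤ blockStart g j + μ j := by
  simp [blocks]

lemma add_mem_blocks_iff (hμ : μ ≤ g) {j : Fin l} {a : ℕ} (ha : a ≤ g j + 1) :
    blockStart g j + a ∈ blocks g μ ↔ a ≤ μ j := by
  refine ⟨fun h => ?_, fun h => mem_blocks.2 ⟨j, by omega, by omega⟩⟩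
  obtain ⟨j', h₁, h₂⟩ := mem_blocks.1 h
  rcases lt_trichotomy j' j with hj | rfl | hj
  · have := blockStart_add_le_of_lt (g := g) hj
    have : μ j' ≤ g j' := hμ j'
    omega
  · omega
  · have := blockStart_add_le_of_lt (g := g) hj
    omega

lemma blocks_subset_range (hμ : μ ≤ g) : blocks g μ ⊆ range (blockStart g l - 1) := by
  intro a ha
  obtain ⟨j, -, h⟩ := mem_blocks.1 ha
  have := blockStart_add_le (g := g) j
  have : μ j ≤ g j := hμ j
  rw [mem_range]
  omega

lemma card_blocks (hμ : μ ≤ g) : #(blocks g μ) = ∑ j, (μ j + 1) := by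
  rw [blocks, card_biUnion]
  · simp only [Nat.card_Icc]
    exact sum_congr rfl fun j _ => by omega
  intro j _ j' _ hne
  simp only [Function.onFun, disjoint_left, mem_Icc]
  rcases lt_or_gt_of_ne hne with h | h <;>
  · have := blockStart_add_le_of_lt (g := g) h
    have : μ j ≤ g j := hμ j
    have : μ j' ≤ g j' := hμ j'
    omega

lemma sub_one_notMem_blocks (hμ : μ ≤ g) (j : Fin l) (hj : 0 < blockStart g j) :
    blockStart g j - 1 ∉ blocks g μ := by
  intro h
  obtain ⟨j', h₁, h₂⟩ := mem_blocks.1 h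
  rcases lt_or_ge j' j with h' | h'
  · have := blockStart_add_le_of_lt (g := g) h'
    have : μ j' ≤ g j' := hμ j'
    omega
  · have := blockStart_mono g (Fin.le_def.mp h')
    omega

lemma leftEndNat_blocks (hμ : μ ≤ g) :
    leftEndNat (blocks g μ) = univ.image fun j : Fin l => blockStart g j := by
  ext a
  simp only [leftEndNat, mem_filter, mem_image, mem_univ, true_and]
  constructor
  · rintro ⟨ha, hleft⟩
    obtain ⟨j, h₁, h₂⟩ := mem_blocks.1 ha
    refine ⟨j, le_antisymm h₁ (not_lt.1 fun hlt => ?_)⟩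
    have : a - 1 ∈ blocks g μ := mem_blocks.2 ⟨j, by omega, by omega⟩
    rcases hleft with h | h <;> [omega; exact h this]
  · rintro ⟨j, rfl⟩
    refine ⟨mem_blocks.2 ⟨j, le_rfl, by omega⟩, ?_⟩
    rcases Nat.eq_zero_or_pos (blockStart g j) with h | h
    · exact Or.inl h
    · exact Or.inr (sub_one_notMem_blocks hμ j h)

lemma blocks_injOn : Set.InjOn (blocks g) (Set.Iic g) := by
  intro μ hμ μ' hμ' h
  funext j
  have hle {ν ν' : Fin l → ℕ} (hν : ν ≤ g) (hν' : ν' ≤ g) (h : blocks g ν = blocks g ν') :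
      ν j ≤ ν' j := by
    have : ν j ≤ g j := hν j
    exact (add_mem_blocks_iff hν' (by omega)).1 (h ▸ (add_mem_blocks_iff hν (by omega)).2 le_rfl)
  exact le_antisymm (hle hμ hμ' h) (hle hμ' hμ h.symm)

lemma exists_mem_leftEndNat_le {P : Finset ℕ} {a : ℕ} (ha : a ∈ P) :
    ∃ b ∈ leftEndNat P, b ≤ a ∧ ∀ x, b ≤ x → x ≤ a → x ∈ P := by
  induction a with
  | zero =>
    exact ⟨0, mem_filter.2 ⟨ha, Or.inl rfl⟩, le_rfl, fun x _ hx => by rwa [Nat.le_zero.1 hx]⟩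
  | succ a ih =>
    by_cases hprev : a ∈ P
    · obtain ⟨b, hb, hba, hrun⟩ := ih hprev
      refine ⟨b, hb, by omega, fun x hbx hxa => ?_⟩
      rcases Nat.lt_or_ge x (a + 1) with h | h
      · exact hrun x hbx (by omega)
      · rwa [le_antisymm hxa h]
    · exact ⟨a + 1, mem_filter.2 ⟨ha, Or.inr hprev⟩, le_rfl,
        fun x h₁ h₂ => by rwa [le_antisymm h₂ h₁]⟩

lemma exists_blocks_eq {P : Finset ℕ} (hP : P ⊆ range (blockStart g l - 1))
    (hleft : leftEndNat P = univ.image fun j : Fin l => blockStart g j) :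
    ∃ μ ≤ g, blocks g μ = P := by
  have hstart (j : Fin l) : blockStart g j ∈ leftEndNat P :=
    hleft ▸ mem_image_of_mem _ (mem_univ j)
  have hgap (j : Fin l) : blockStart g j + (g j + 1) ∉ P := by
    intro hmem
    have hsucc := blockStart_succ (g := g) j
    by_cases hj : j.val + 1 < l
    · have := (mem_filter.1 (hstart ⟨j + 1, hj⟩)).2
      simp only at this
      rcases this with h | h
      · omega
      · exact h (by convert hmem using 1; omega)
    · have := mem_range.1 (hP hmem)
      rw [show j.val + 1 = l by omega] at hsucc
      omega
  have hend (j : Fin l) : ∃ m, blockStart g j + m ∉ P := ⟨_, hgap j⟩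
  -- `Nat.find (hend j)` is the length of the run of `P` starting at `blockStart g j`.
  refine ⟨fun j => Nat.find (hend j) - 1, fun j => ?_, ?_⟩
  · show Nat.find (hend j) - 1 ≤ g j
    have := Nat.find_min' (hend j) (hgap j)
    omega
  have hpos (j : Fin l) : 0 < Nat.find (hend j) :=
    (Nat.find_pos _).2 fun h => h (by simpa using (mem_filter.1 (hstart j)).1)
  ext a
  rw [mem_blocks]
  constructor
  · rintro ⟨j, h₁, h₂⟩
    have := Nat.find_min (hend j) (m := a - blockStart g j) (by have := hpos j; omega)
    rwa [not_not, Nat.add_sub_cancel' h₁] at this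
  · intro ha
    obtain ⟨b, hb, hba, hrun⟩ := exists_mem_leftEndNat_le ha
    obtain ⟨j, -, rfl⟩ := mem_image.1 (hleft ▸ hb)
    refine ⟨j, hba, ?_⟩
    by_contra hlt
    exact Nat.find_spec (hend j) (hrun _ (by omega) (by omega))

end Blocks

section Transfer

variable {n : ℕ} (c : ZMod n) {P Q : Finset ℕ}

lemma ord_add_natCast {a : ℕ} (ha : a < n) : ord c (c + a) = a := by
  rw [ord, add_sub_cancel_left, ZMod.val_natCast, Nat.mod_eq_of_lt ha]

lemma image_ord_image_add (hP : P ⊆ range n) :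
    (P.image fun a : ℕ => c + (a : ZMod n)).image (ord c) = P := by
  rw [image_image]
  exact (image_congr fun a ha => ord_add_natCast c (mem_range.1 (hP ha))).trans image_id'

lemma image_add_injOn (hP : P ⊆ range n) (hQ : Q ⊆ range n)
    (h : P.image (fun a : ℕ => c + (a : ZMod n)) = Q.image fun a : ℕ => c + (a : ZMod n)) :
    P = Q := by
  rw [← image_ord_image_add c hP, h, image_ord_image_add c hQ]

lemma card_image_add (hP : P ⊆ range n) : #(P.image fun a : ℕ => c + (a : ZMod n)) = #P :=
  card_image_of_injOn fun a ha b hb h => by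
    simpa [ord_add_natCast c (mem_range.1 (hP ha)), ord_add_natCast c (mem_range.1 (hP hb))]
      using congrArg (ord c) h

lemma add_natCast_mem_image_add_iff (hP : P ⊆ range n) {a : ℕ} (ha : a < n) :
    c + (a : ZMod n) ∈ P.image (fun b : ℕ => c + (b : ZMod n)) ↔ a ∈ P := by
  refine ⟨fun h => ?_, mem_image_of_mem _⟩
  obtain ⟨b, hb, hba⟩ := mem_image.1 h
  have := congrArg (ord c) hba
  rw [ord_add_natCast c (mem_range.1 (hP hb)), ord_add_natCast c ha] at this
  exact this ▸ hb

variable [NeZero n]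

lemma add_ord (x : ZMod n) : c + (ord c x : ZMod n) = x := by
  rw [ord, ZMod.natCast_zmod_val, add_sub_cancel]

lemma ord_lt (x : ZMod n) : ord c x < n := ZMod.val_lt _

lemma image_add_image_ord (S : Finset (ZMod n)) :
    (S.image (ord c)).image (fun a : ℕ => c + (a : ZMod n)) = S := by
  simp [image_image, Function.comp_def, add_ord]

lemma add_natCast_pred : c + ((n - 1 : ℕ) : ZMod n) = c - 1 := by
  rw [Nat.cast_sub NeZero.one_le, ZMod.natCast_self, zero_sub, Nat.cast_one, sub_eq_add_neg]

lemma add_natCast_sub_one_mem_image_add_iff (hP : P ⊆ range (n - 1)) {a : ℕ} (ha : a < n) :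
    c + (a : ZMod n) - 1 ∈ P.image (fun b : ℕ => c + (b : ZMod n)) ↔ a ≠ 0 ∧ a - 1 ∈ P := by
  have hP' : P ⊆ range n := hP.trans (range_subset_range.2 (Nat.sub_le n 1))
  rcases a with _ | a
  · rw [Nat.cast_zero, add_zero, ← add_natCast_pred,
      add_natCast_mem_image_add_iff c hP' (Nat.sub_one_lt (NeZero.ne n))]
    simpa using fun h => (mem_range.1 (hP h)).false
  · rw [Nat.cast_succ, ← add_assoc, add_sub_cancel_right,
      add_natCast_mem_image_add_iff c hP' (by omega)]
    simp

/-- Since `n - 1 ∉ P`, the wrap-around from `c` to `c - 1` does not join two runs. -/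
lemma leftEnd_image_add (hP : P ⊆ range (n - 1)) :
    leftEnd (P.image fun a : ℕ => c + (a : ZMod n)) =
      (leftEndNat P).image fun a : ℕ => c + (a : ZMod n) := by
  ext x
  simp only [leftEnd, leftEndNat, mem_filter]
  constructor
  · rintro ⟨hx, hprev⟩
    obtain ⟨a, ha, rfl⟩ := mem_image.1 hx
    have := add_natCast_sub_one_mem_image_add_iff c hP
      ((mem_range.1 (hP ha)).trans_le (Nat.sub_le n 1))
    refine mem_image.2 ⟨a, mem_filter.2 ⟨ha, ?_⟩, rfl⟩
    rw [or_iff_not_imp_left]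
    exact fun h₀ h₁ => hprev (this.2 ⟨h₀, h₁⟩)
  · intro hx
    obtain ⟨a, ha, rfl⟩ := mem_image.1 hx
    obtain ⟨ha, hleft⟩ := mem_filter.1 ha
    have := add_natCast_sub_one_mem_image_add_iff c hP
      ((mem_range.1 (hP ha)).trans_le (Nat.sub_le n 1))
    refine ⟨mem_image_of_mem _ ha, fun h => ?_⟩
    obtain ⟨h₀, h₁⟩ := this.1 h
    exact hleft.elim h₀ (· h₁)

end Transfer

section Fiber

variable {n l : ℕ} [NeZero n] (c : ZMod n) {g : Fin l → ℕ}

lemma exists_image_blocks_eq (hg : blockStart g l = n) {S : Finset (ZMod n)}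
    (hleft : leftEnd S = univ.image fun j : Fin l => c + (blockStart g j : ZMod n)) :
    ∃ μ ≤ g, (blocks g μ).image (fun a : ℕ => c + (a : ZMod n)) = S := by
  set P := S.image (ord c)
  have hPS : P.image (fun a : ℕ => c + (a : ZMod n)) = S := image_add_image_ord c S
  have hl : 0 < l :=
    Nat.pos_of_ne_zero fun h => NeZero.ne n (by subst h; rw [← hg, blockStart_zero])
  have hc : c - 1 ∉ S := by
    have : c ∈ leftEnd S := hleft ▸ mem_image.2 ⟨⟨0, hl⟩, mem_univ _, by simp [blockStart_zero]⟩
    exact (mem_filter.1 this).2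
  have hP : P ⊆ range (n - 1) := by
    intro a ha
    obtain ⟨x, -, rfl⟩ := mem_image.1 ha
    refine mem_range.2 (lt_of_le_of_ne (Nat.le_sub_one_of_lt (ord_lt c x)) fun h => hc ?_)
    rw [← add_natCast_pred, ← h, ← hPS]
    exact mem_image_of_mem _ ha
  have hleftP : leftEndNat P = univ.image fun j : Fin l => blockStart g j := by
    refine image_add_injOn c
      ((filter_subset _ _).trans (hP.trans (range_subset_range.2 (Nat.sub_le n 1))))
      (fun a ha => ?_) ?_
    · obtain ⟨j, -, rfl⟩ := mem_image.1 ha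
      exact mem_range.2 (hg ▸ (blockStart_add_le (g := g) j).trans_lt' (by omega))
    · rw [← leftEnd_image_add c hP, hPS, hleft, image_image]
      rfl
  obtain ⟨μ, hμ, hμP⟩ := exists_blocks_eq (hg ▸ hP) hleftP
  exact ⟨μ, hμ, by rw [hμP, hPS]⟩

lemma card_filter_leftEnd_eq (hg : blockStart g l = n) (m : ℕ) :
    #{S : Finset (ZMod n) | #S = m + l ∧
        leftEnd S = univ.image fun j : Fin l => c + (blockStart g j : ZMod n)} =
      #{μ ∈ Nat.antidiagonalTuple l m | ∀ j, μ j ≤ g j} := by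
  have hsub {μ : Fin l → ℕ} (hμ : μ ≤ g) : blocks g μ ⊆ range n :=
    (hg ▸ blocks_subset_range hμ).trans (range_subset_range.2 (Nat.sub_le n 1))
  have hcard {μ : Fin l → ℕ} (hμ : μ ≤ g) :
      #((blocks g μ).image fun a : ℕ => c + (a : ZMod n)) = ∑ j, μ j + l := by
    rw [card_image_add c (hsub hμ), card_blocks hμ, sum_add_distrib]
    simp
  symm
  refine card_bij (fun μ _ => (blocks g μ).image fun a : ℕ => c + (a : ZMod n))
    (fun μ hμ => ?_) (fun μ hμ μ' hμ' h => ?_) (fun S hS => ?_)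
  · obtain ⟨hsum, hμ⟩ := mem_filter.1 hμ
    refine mem_filter.2 ⟨mem_univ _, by rw [hcard hμ, Nat.mem_antidiagonalTuple.1 hsum], ?_⟩
    rw [leftEnd_image_add c (hg ▸ blocks_subset_range hμ), leftEndNat_blocks hμ, image_image]
    rfl
  · have hμ := (mem_filter.1 hμ).2
    have hμ' := (mem_filter.1 hμ').2
    exact blocks_injOn hμ hμ' (image_add_injOn c (hsub hμ) (hsub hμ') h)
  · obtain ⟨-, hS, hleft⟩ := mem_filter.1 hS
    obtain ⟨μ, hμ, rfl⟩ := exists_image_blocks_eq c hg hleft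
    rw [hcard hμ, Nat.add_right_cancel_iff] at hS
    exact ⟨μ, mem_filter.2 ⟨Nat.mem_antidiagonalTuple.2 hS, hμ⟩, rfl⟩

end Fiber

section Decode

def tupleOfList (l : ℕ) (L : List ℕ) : Fin l → ℕ := fun j => L.getD j 0

lemma ofFn_tupleOfList {l : ℕ} {L : List ℕ} (h : L.length = l) :
    List.ofFn (tupleOfList l L) = L := by
  subst h
  exact List.ext_getElem List.length_ofFn fun j _ h => by
    simp [tupleOfList, h]

lemma tupleOfList_ofFn {l : ℕ} (f : Fin l → ℕ) : tupleOfList l (List.ofFn f) = f := by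
  funext j
  simp [tupleOfList]

lemma bijOn_tupleOfList (l m : ℕ) :
    Set.BijOn (tupleOfList l) {L | L.length = l ∧ L.sum = m} ↑(Nat.antidiagonalTuple l m) := by
  refine ⟨fun L ⟨hlen, hsum⟩ => ?_, fun L hL L' hL' h => ?_, fun f hf => ?_⟩
  · rw [mem_coe, Nat.mem_antidiagonalTuple, ← List.sum_ofFn, ofFn_tupleOfList hlen, hsum]
  · rw [← ofFn_tupleOfList hL.1, h, ofFn_tupleOfList hL'.1]
  · refine ⟨List.ofFn f, ⟨List.length_ofFn, ?_⟩, tupleOfList_ofFn f⟩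
    rw [List.sum_ofFn]
    exact Nat.mem_antidiagonalTuple.1 hf

lemma blockStart_tupleOfList {l : ℕ} {L : List ℕ} (h : L.length = l) :
    blockStart (tupleOfList l L) l = L.sum + 2 * l := by
  rw [blockStart_length, ← List.sum_ofFn, ofFn_tupleOfList h]

variable {n : ℕ} {L : List ℕ}

lemma length_phiList : (phiList n L).length = L.length := by
  simp [phiList]

lemma getElem_phiList {j : ℕ} (hj : j + 1 < L.length) :
    (phiList n L)[j]'(by rw [length_phiList]; omega) = (L[j + 1] + n - L[j] - 2) % n := by
  simp [phiList, List.getElem_rotate, Nat.mod_eq_of_lt hj]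

/-- An entry of `phiList` that is at most `n - 2` is an honest gap: `(b + n - a - 2) % n` would be
`n - 1` if `b = a + 1`. -/
lemma getElem_succ_eq_of_phiList (hL : L.SortedLT) (hn : ∀ x ∈ L, x < n) {j : ℕ}
    (hj : j + 1 < L.length) (hgap : (phiList n L)[j]'(by rw [length_phiList]; omega) + 2 ≤ n) :
    L[j + 1] = L[j] + ((phiList n L)[j]'(by rw [length_phiList]; omega) + 2) := by
  rw [getElem_phiList hj] at hgap ⊢
  have hlt : L[j] < L[j + 1] := hL.getElem_lt_getElem_of_lt (Nat.lt_succ_self j)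
  have hbound := hn _ (List.getElem_mem hj)
  rcases Nat.lt_or_ge (L[j + 1]) (L[j] + 2) with h | h
  · have h' : L[j + 1] + n - L[j] - 2 = n - 1 := by omega
    rw [h', Nat.mod_eq_of_lt (by omega)] at hgap
    omega
  · rw [show L[j + 1] + n - L[j] - 2 = L[j + 1] - L[j] - 2 + n by omega, Nat.add_mod_right,
      Nat.mod_eq_of_lt (by omega)]
    omega

lemma getElem_eq_add_blockStart (hL : L.SortedLT) (hn : ∀ x ∈ L, x < n) {l : ℕ}
    (hlen : L.length = l) (hsum : (phiList n L).sum + 2 ≤ n) {j : ℕ} (hj : j < l) :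
    L[j] = L[0] + blockStart (tupleOfList l (phiList n L)) j := by
  induction j with
  | zero => rw [blockStart_zero, add_zero]
  | succ j ih =>
    have hj' : j + 1 < L.length := hlen ▸ hj
    have hentry : (phiList n L)[j]'(by rw [length_phiList]; omega) ≤ (phiList n L).sum :=
      List.le_sum_of_mem (List.getElem_mem _)
    rw [getElem_succ_eq_of_phiList hL hn hj' (by omega), ih (by omega),
      blockStart_succ (g := tupleOfList l (phiList n L)) ⟨j, by omega⟩]
    simp [tupleOfList, add_assoc, show j < (phiList n L).length by rw [length_phiList]; omega]

lemma exists_eq_image_blockStart [NeZero n] (i : ZMod n) {T : Finset (ZMod n)} {l : ℕ}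
    (hl : 0 < l) (hlen : (phi i T).length = l) (hsum : (phi i T).sum + 2 ≤ n) :
    ∃ c : ZMod n,
      T = univ.image fun j : Fin l => c + (blockStart (tupleOfList l (phi i T)) j : ZMod n) := by
  obtain ⟨L, hL⟩ : ∃ L, (T.image (ord i)).sort (· ≤ ·) = L := ⟨_, rfl⟩
  have hφ : phi i T = phiList n L := by rw [phi, hL]
  have hLlen : L.length = l := by rw [← hlen, hφ, length_phiList]
  have hLT : L.toFinset = T.image (ord i) := by rw [← hL, sort_toFinset]
  have hLn (x : ℕ) (hx : x ∈ L) : x < n := by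
    obtain ⟨y, -, rfl⟩ := mem_image.1 (hLT ▸ List.mem_toFinset.2 hx)
    exact ord_lt i y
  have hLsorted : L.SortedLT := hL ▸ sortedLT_sort _
  rw [hφ] at hsum ⊢
  have hget (j : Fin l) := getElem_eq_add_blockStart hLsorted hLn hLlen hsum j.isLt
  have hLfin : L.toFinset =
      univ.image fun j : Fin l => L[0] + blockStart (tupleOfList l (phiList n L)) j := by
    ext a
    simp only [List.mem_toFinset, List.mem_iff_getElem, mem_image, mem_univ, true_and]
    constructor
    · rintro ⟨j, hj, rfl⟩
      exact ⟨⟨j, by omega⟩, (hget ⟨j, by omega⟩).symm⟩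
    · rintro ⟨j, rfl⟩
      exact ⟨j, by omega, hget j⟩
  refine ⟨i + (L[0] : ℕ), ?_⟩
  conv_lhs => rw [← image_add_image_ord i T, ← hLT, hLfin, image_image]
  refine image_congr fun j _ => ?_
  simp only [Function.comp_apply, Nat.cast_add]
  ring

end Decode

lemma ncard_Ck_eq_sum {n : ℕ} [NeZero n] (k : ℕ) (𝒯 : Finset (Finset (ZMod n))) :
    (Ck n k 𝒯).ncard = ∑ T ∈ 𝒯, #{S : Finset (ZMod n) | #S = k ∧ leftEnd S = T} := by
  have hCk : Ck n k 𝒯 = ↑({S | #S = k ∧ leftEnd S ∈ 𝒯} : Finset (Finset (ZMod n))) := by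
    ext
    simp [Ck]
  rw [hCk, Set.ncard_coe_finset,
    card_eq_sum_card_fiberwise (f := leftEnd) (t := 𝒯) fun S hS => (mem_filter.1 hS).2.2]
  refine sum_congr rfl fun T hT => ?_
  rw [filter_filter]
  exact congrArg card <| filter_congr fun S _ =>
    ⟨fun h => ⟨h.1.1, h.2⟩, fun h => ⟨⟨h.1, h.2 ▸ hT⟩, h.2⟩⟩

theorem card_Ck_of_slice_general (n l k : ℕ) (hl : 2 ≤ l) (hlk : l ≤ k)
    (hkn : k ≤ n - l) (𝒯 : Finset (Finset (ZMod n))) (h𝒯 : IsSlice n l 𝒯) :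
    (Ck n k 𝒯).ncard = (k - 1).choose (l - 1) * (n - k - 1).choose (l - 1) := by
  have : NeZero n := ⟨by omega⟩
  obtain ⟨-, -, -, -, i, hφ⟩ := h𝒯
  set gaps : Finset (ZMod n) → Fin l → ℕ := fun T => tupleOfList l (phi i T)
  have hgaps := (bijOn_tupleOfList l (n - 2 * l)).comp hφ
  rw [show n - 2 * l = k - l + (n - k - l) by omega] at hgaps
  have hfiber (T : Finset (ZMod n)) (hT : T ∈ 𝒯) :
      #{S : Finset (ZMod n) | #S = k ∧ leftEnd S = T} =
        #{μ ∈ Nat.antidiagonalTuple l (k - l) | ∀ j, μ j ≤ gaps T j} := by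
    obtain ⟨hlen, hsum⟩ := hφ.mapsTo hT
    obtain ⟨c, hc⟩ := exists_eq_image_blockStart i (by omega) hlen (by omega)
    rw [← card_filter_leftEnd_eq c (by rw [blockStart_tupleOfList hlen, hsum]; omega) (k - l),
      Nat.sub_add_cancel hlk, ← hc]
  calc (Ck n k 𝒯).ncard
      = ∑ T ∈ 𝒯, #{μ ∈ Nat.antidiagonalTuple l (k - l) | ∀ j, μ j ≤ gaps T j} := by
        rw [ncard_Ck_eq_sum]
        exact sum_congr rfl hfiber
    _ = ∑ L ∈ Nat.antidiagonalTuple l (k - l + (n - k - l)),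
          #{μ ∈ Nat.antidiagonalTuple l (k - l) | ∀ j, μ j ≤ L j} :=
        sum_nbij gaps (fun _ hT => hgaps.mapsTo hT) hgaps.injOn hgaps.surjOn fun _ _ => rfl
    _ = (k - 1).choose (l - 1) * (n - k - 1).choose (l - 1) := by
        rw [sum_card_filter_le_antidiagonalTuple, card_antidiagonalTuple (by omega),
          card_antidiagonalTuple (by omega)]
        congr 2 <;> omega

/-- Theorem 3.8 (cardinality): if `𝒯` is a slice of `l`-subsets of `[n]` and
`l ≤ k ≤ n - l`, then `C_k(𝒯)` has exactly `C(k-1, l-1) * C(n-k-1, l-1)` elements. -/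
theorem card_Ck_of_slice (n l k : ℕ) (hn : 0 < n) (hl : 2 ≤ l) (hlk : l ≤ k)
    (hkn : k ≤ n - l) (𝒯 : Finset (Finset (ZMod n))) (h𝒯 : IsSlice n l 𝒯) :
    (Ck n k 𝒯).ncard = (k - 1).choose (l - 1) * (n - k - 1).choose (l - 1) :=
  card_Ck_of_slice_general n l k hl hlk hkn 𝒯 h𝒯
end

section
/- Elements of I_n^{l-1} \ Î_n^{l-1} do not intertwine any element of I_n^{l-1}: if I = (i_1,...,i_l) ∈ I_n^{l-1} satisfies i_l + 2 > i_1 + n, then for every J ∈ I_n^{l-1}, neither I intertwines J nor J intertwines I (under the cyclic order). -/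
/-!
If `i_l + 2 > i_1 + n` with all `i_j ∈ [1, n]`, then `i_1 = 1` and `i_l = n`, so `I` contains the
cyclically adjacent residues `0` and `1`. In an intertwining `a₁ < b₁ < ⋯ < a_l < b_l` every
`a` has a partner `b > a` preceding the next `a`, and dually in `b₁ < a₁ < ⋯`. In any cyclic
order `x + 1` directly follows `x`, unless `x` is last and `x + 1` first; neither leaves room
for a partner.
-/

namespace List

variable {α : Type*}

theorem flatMap_zip_eq_interleave :
    ∀ {l₁ l₂ : List α}, l₁.length = l₂.length →
      ((l₁.zip l₂).flatMap fun p => [p.1, p.2]) = l₁.interleave l₂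
  | [], [], _ => by simp
  | _ :: _, _ :: _, h => by simp [flatMap_zip_eq_interleave (by simpa using h)]

variable {r : α → α → Prop} [Std.Asymm r]

theorem exists_next_mem_right_of_pairwise_interleave :
    ∀ {l₁ l₂ : List α}, l₁.length = l₂.length → (l₁.interleave l₂).Pairwise r →
      ∀ a ∈ l₁, ∃ b ∈ l₂, r a b ∧ ∀ a' ∈ l₁, r a a' → r b a'
  | a₀ :: l₁, b₀ :: l₂, h, hp, a, ha => by
    have hlen : l₁.length = l₂.length := by simpa using h
    obtain ⟨⟨hab₀, ha₀⟩, hb₀, hp⟩ : (r a₀ b₀ ∧ ∀ x ∈ l₁.interleave l₂, r a₀ x) ∧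
        (∀ x ∈ l₁.interleave l₂, r b₀ x) ∧ (l₁.interleave l₂).Pairwise r := by
      simpa using hp
    have hmem : ∀ {x}, x ∈ l₁ → x ∈ l₁.interleave l₂ := fun hx =>
      left_sublist_interleave.subset hx
    rcases mem_cons.mp ha with rfl | ha₁
    · refine ⟨b₀, mem_cons_self, hab₀, fun a' ha' hlt => ?_⟩
      rcases mem_cons.mp ha' with rfl | ha'
      · exact absurd hlt (irrefl _)
      · exact hb₀ _ (hmem ha')
    · obtain ⟨b, hb, hab, hnext⟩ := exists_next_mem_right_of_pairwise_interleave hlen hp a ha₁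
      refine ⟨b, mem_cons_of_mem _ hb, hab, fun a' ha' hlt => ?_⟩
      rcases mem_cons.mp ha' with rfl | ha'
      · exact absurd hlt (asymm (ha₀ _ (hmem ha₁)))
      · exact hnext a' ha' hlt

theorem exists_prev_mem_left_of_pairwise_interleave {l₁ l₂ : List α}
    (h : l₁.length = l₂.length) (hp : (l₁.interleave l₂).Pairwise r) :
    ∀ a ∈ l₂, ∃ b ∈ l₁, r b a ∧ ∀ a' ∈ l₂, r a' a → r a' b := by
  have : Std.Asymm (fun x y => r y x) := ⟨fun _ _ hxy hyx => asymm hxy hyx⟩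
  have hp' : (l₂.reverse.interleave l₁.reverse).Pairwise (fun x y => r y x) := by
    rwa [← reverse_interleave_of_length_eq_length h, pairwise_reverse]
  intro a ha
  simpa using exists_next_mem_right_of_pairwise_interleave (by simp [h]) hp' a
    (mem_reverse.2 ha)

end List

namespace NatIntertwines

variable {A B : Finset ℕ} {a : ℕ}

theorem pairwise_interleave (h : NatIntertwines A B) :
    ((A.sort (· ≤ ·)).interleave (B.sort (· ≤ ·))).Pairwise (· < ·) := by
  rw [← List.flatMap_zip_eq_interleave (by simpa using h.1)]
  exact List.isChain_iff_pairwise.1 h.2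

theorem exists_next_mem_right (h : NatIntertwines A B) (ha : a ∈ A) :
    ∃ b ∈ B, a < b ∧ ∀ a' ∈ A, a < a' → b < a' := by
  simpa using List.exists_next_mem_right_of_pairwise_interleave (by simpa using h.1)
    h.pairwise_interleave a (by simpa using ha)

theorem exists_prev_mem_left (h : NatIntertwines B A) (ha : a ∈ A) :
    ∃ b ∈ B, b < a ∧ ∀ a' ∈ A, a' < a → a' < b := by
  simpa using List.exists_prev_mem_left_of_pairwise_interleave (by simpa using h.1)
    h.pairwise_interleave a (by simpa using ha)

end NatIntertwines

lemma ord_add_one {n : ℕ} [NeZero n] (i x : ZMod n) : ord i (x + 1) = (ord i x + 1) % n := by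
  rw [ord, ord, add_sub_right_comm, ZMod.val_add, ZMod.val_one_eq_one_mod, Nat.add_mod_mod]

namespace CycIntertwines

variable {n : ℕ} [NeZero n] {A B : Finset (ZMod n)} {x : ZMod n}

theorem add_one_notMem_left (h : CycIntertwines A B) (hx : x ∈ A) : x + 1 ∉ A := by
  intro hx₁
  obtain ⟨i, h⟩ := h
  obtain ⟨b, hb, hxb, hnext⟩ := h.exists_next_mem_right (Finset.mem_image_of_mem (ord i) hx)
  obtain ⟨y, -, rfl⟩ := Finset.mem_image.1 hb
  have hy : ord i y < n := ZMod.val_lt _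
  have hx₁b := hnext _ (Finset.mem_image_of_mem (ord i) hx₁)
  rw [ord_add_one, Nat.mod_eq_of_lt (show ord i x + 1 < n by omega)] at hx₁b
  omega

theorem add_one_notMem_right (h : CycIntertwines B A) (hx : x ∈ A) : x + 1 ∉ A := by
  intro hx₁
  obtain ⟨i, h⟩ := h
  obtain ⟨b, -, hbx₁, hprev⟩ := h.exists_prev_mem_left (Finset.mem_image_of_mem (ord i) hx₁)
  have hxn : ord i x < n := ZMod.val_lt _
  rw [ord_add_one] at hbx₁ hprev
  have hwrap : ord i x + 1 ≠ n := by
    intro hn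
    rw [hn, Nat.mod_self] at hbx₁
    omega
  rw [Nat.mod_eq_of_lt (by omega)] at hbx₁ hprev
  have := hprev (ord i x) (Finset.mem_image_of_mem (ord i) hx) (Nat.lt_succ_self _)
  omega

end CycIntertwines

/-- Elements of `I_n^{l-1} \ Î_n^{l-1}` do not intertwine (cyclically) any element of
`I_n^{l-1}`: if `I = (i₁,…,i_l)` is increasing with consecutive gaps at least 2 but
`i_l + 2 > i₁ + n`, then for every `J ∈ I_n^{l-1}`, neither `I` intertwines `J` nor `J`
intertwines `I`. -/
theorem consecutive_tuple_not_intertwining (n l : ℕ) (hl : 0 < l)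
    (t s : Fin l → ℕ)
    (htrange : ∀ j, 1 ≤ t j ∧ t j ≤ n)
    (hIbad : t ⟨l - 1, by omega⟩ + 2 > t ⟨0, hl⟩ + n) :
    ¬ CycIntertwines (Finset.univ.image fun j => ((t j : ℕ) : ZMod n))
        (Finset.univ.image fun j => ((s j : ℕ) : ZMod n)) ∧
      ¬ CycIntertwines (Finset.univ.image fun j => ((s j : ℕ) : ZMod n))
        (Finset.univ.image fun j => ((t j : ℕ) : ZMod n)) := by
  have ht₀ := htrange ⟨0, hl⟩
  have htₗ := htrange ⟨l - 1, by omega⟩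
  have hfirst : t ⟨0, hl⟩ = 1 := by omega
  have hlast : t ⟨l - 1, by omega⟩ = n := by omega
  have : NeZero n := ⟨by omega⟩
  have hx : ((n : ℕ) : ZMod n) ∈ Finset.univ.image fun j => ((t j : ℕ) : ZMod n) :=
    Finset.mem_image.2 ⟨_, Finset.mem_univ _, by rw [hlast]⟩
  have hx₁ : ((n : ℕ) : ZMod n) + 1 ∈ Finset.univ.image fun j => ((t j : ℕ) : ZMod n) :=
    Finset.mem_image.2 ⟨⟨0, hl⟩, Finset.mem_univ _, by simp [hfirst]⟩
  exact ⟨fun h => h.add_one_notMem_left hx hx₁, fun h => h.add_one_notMem_right hx hx₁⟩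
end

section
/- The cardinality of I_n^{l-1} \ Î_n^{l-1} equals binomial(n-l-1, l-2), and consequently binomial(n-l, l-1) - binomial(n-l-1, l-2) = binomial(n-l-1, l-1). -/
/-!
All entries lie in `[0, n - 1]`, so the wrapping condition `i_l + 2 > i_1 + n` forces the first
entry to be `0` and the last to be `n - 1`. Subtracting `j + 2` from the interior entry `t (j + 1)`
turns the `l - 2` interior entries, whose gaps are at least two, into a strictly increasing
sequence in `[0, n - l - 2]`, and this is a bijection. Hence the count is `C(n - l - 1, l - 2)`,
and the binomial identity is Pascal's rule.
-/

theorem Nat.card_orderEmbedding_fin (k m : ℕ) : Nat.card (Fin k ↪o Fin m) = m.choose k := by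
  rw [Nat.card_congr Set.powersetCard.ofFinEmbEquiv, Set.powersetCard.card, Nat.card_fin]

theorem add_two_mul_le_of_gap_two {l : ℕ} {u : Fin l → ℕ}
    (hu : ∀ (j : ℕ) (h : j + 1 < l), u ⟨j, by omega⟩ + 2 ≤ u ⟨j + 1, h⟩)
    {a b : ℕ} (hab : a ≤ b) (hb : b < l) :
    u ⟨a, by omega⟩ + 2 * (b - a) ≤ u ⟨b, hb⟩ := by
  induction b, hab using Nat.le_induction with
  | base => simp
  | succ b hab ih =>
    have := hu b hb
    have := ih (by omega)
    omega

/-- `I_n^{l-1} \ Î_n^{l-1}`, the paper's `i_j` being `t (j - 1) + 1`. -/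
def wrappingTuples (n l : ℕ) (hl : 0 < l) : Set (Fin l → Fin n) :=
  {t | (∀ (j : ℕ) (h : j + 1 < l),
      (t ⟨j, by omega⟩ : ℕ) + 2 ≤ (t ⟨j + 1, h⟩ : ℕ)) ∧
    ((t ⟨l - 1, by omega⟩ : ℕ) + 1) + 2 > ((t ⟨0, hl⟩ : ℕ) + 1) + n}

namespace wrappingTuples

variable {n l : ℕ}

section

variable {hl₀ : 0 < l} {t : Fin l → Fin n}

theorem val_first_eq_zero (ht : t ∈ wrappingTuples n l hl₀) : (t ⟨0, hl₀⟩ : ℕ) = 0 := by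
  have := ht.2
  omega

theorem val_last_eq (ht : t ∈ wrappingTuples n l hl₀) :
    (t ⟨l - 1, by omega⟩ : ℕ) = n - 1 := by
  have := ht.2
  omega

theorem two_mul_le_val (ht : t ∈ wrappingTuples n l hl₀) {i : ℕ} (hi : i < l) :
    2 * i ≤ t ⟨i, hi⟩ := by
  have := add_two_mul_le_of_gap_two (u := fun i => (t i : ℕ)) ht.1 (Nat.zero_le i) hi
  have := val_first_eq_zero ht
  simp_all

theorem val_add_two_mul_le (ht : t ∈ wrappingTuples n l hl₀) {i : ℕ} (hi : i < l) :
    (t ⟨i, hi⟩ : ℕ) + 2 * (l - 1 - i) ≤ n - 1 := by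
  have := add_two_mul_le_of_gap_two (u := fun i => (t i : ℕ)) ht.1 (a := i) (b := l - 1)
    (by omega) (by omega)
  rwa [val_last_eq ht] at this

def interior (ht : t ∈ wrappingTuples n l hl₀) : Fin (l - 2) ↪o Fin (n - l - 1) :=
  OrderEmbedding.ofStrictMono
    (fun j => ⟨t ⟨j + 1, by omega⟩ - (j + 2), by
      have := two_mul_le_val ht (i := j + 1) (by omega)
      have := val_add_two_mul_le ht (i := j + 1) (by omega)
      omega⟩)
    (fun a b hab => by
      have := two_mul_le_val ht (i := a + 1) (by omega)
      have := add_two_mul_le_of_gap_two (u := fun i => (t i : ℕ)) ht.1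
        (a := a + 1) (b := b + 1) (by omega) (by omega)
      simp only [Fin.lt_def] at hab ⊢
      omega)

theorem val_interior (ht : t ∈ wrappingTuples n l hl₀) (j : Fin (l - 2)) :
    (interior ht j : ℕ) = t ⟨j + 1, by omega⟩ - (j + 2) :=
  rfl

end

def ofInterior (hn : 0 < n) (f : Fin (l - 2) → Fin (n - l - 1)) : Fin l → Fin n :=
  fun i => if h₀ : (i : ℕ) = 0 then ⟨0, hn⟩
    else if h₁ : (i : ℕ) = l - 1 then ⟨n - 1, by omega⟩
    else ⟨f ⟨i - 1, by omega⟩ + i + 1, by omega⟩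

theorem val_ofInterior (hn : 0 < n) (f : Fin (l - 2) → Fin (n - l - 1)) {i : ℕ} (hi : i < l) :
    (ofInterior hn f ⟨i, hi⟩ : ℕ) =
      if h₀ : i = 0 then 0 else if h₁ : i = l - 1 then n - 1
      else f ⟨i - 1, by omega⟩ + i + 1 := by
  unfold ofInterior
  split_ifs <;> rfl

theorem ofInterior_mem (hl : 2 ≤ l) (hn : l < n) {f : Fin (l - 2) → Fin (n - l - 1)}
    (hf : StrictMono f) :
    ofInterior (Nat.zero_lt_of_lt hn) f ∈ wrappingTuples n l (zero_lt_two.trans_le hl) := by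
  refine ⟨fun j hj => ?_, by simp [val_ofInterior, show l - 1 ≠ 0 by omega]; omega⟩
  rw [val_ofInterior, val_ofInterior]
  split_ifs <;> first
    | contradiction
    | omega
    | have := @hf ⟨j - 1, by omega⟩ ⟨j + 1 - 1, by omega⟩ (Fin.mk_lt_mk.2 (by omega)); omega

theorem ofInterior_interior {hl₀ : 0 < l} {t : Fin l → Fin n}
    (ht : t ∈ wrappingTuples n l hl₀) (hn : 0 < n) : ofInterior hn (interior ht) = t := by
  funext ⟨i, hi⟩
  ext
  rw [val_ofInterior]
  split_ifs with h₀ h₁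
  · subst h₀
    exact (val_first_eq_zero ht).symm
  · rw [show (⟨i, hi⟩ : Fin l) = ⟨l - 1, by omega⟩ from Fin.ext h₁, val_last_eq ht]
  · obtain ⟨k, rfl⟩ : ∃ k, i = k + 1 := ⟨i - 1, by omega⟩
    have := two_mul_le_val ht hi
    simp only [val_interior, Nat.add_sub_cancel]
    omega

theorem interior_ofInterior (hl : 2 ≤ l) (hn : l < n) {f : Fin (l - 2) → Fin (n - l - 1)}
    (hf : StrictMono f) : ⇑(interior (ofInterior_mem hl hn hf)) = f := by
  funext j
  ext
  rw [val_interior, val_ofInterior, dif_neg (by omega), dif_neg (by omega)]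
  simp only [Nat.add_sub_cancel, Fin.eta]
  omega

def equivOrderEmbedding (hl : 2 ≤ l) (hn : l < n) :
    wrappingTuples n l (zero_lt_two.trans_le hl) ≃ (Fin (l - 2) ↪o Fin (n - l - 1)) where
  toFun t := interior t.2
  invFun f := ⟨ofInterior (Nat.zero_lt_of_lt hn) f, ofInterior_mem hl hn f.strictMono⟩
  left_inv t := Subtype.ext (ofInterior_interior t.2 _)
  right_inv f := DFunLike.ext' (interior_ofInterior hl hn f.strictMono)

theorem ncard_eq_choose (hl : 2 ≤ l) (hn : l < n) :
    (wrappingTuples n l (zero_lt_two.trans_le hl)).ncard = (n - l - 1).choose (l - 2) := by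
  rw [← Nat.card_coe_set_eq, Nat.card_congr (equivOrderEmbedding hl hn),
    Nat.card_orderEmbedding_fin]

end wrappingTuples

/-- Counting `I_n^{l-1} \ Î_n^{l-1}`: the increasing `l`-tuples `(i₁,…,i_l)` in `[n]`
(encoded as `t : Fin l → Fin n`, with `iⱼ = t j + 1`) with consecutive gaps at least 2
and `i_l + 2 > i₁ + n` number `C(n-l-1, l-2)`; consequently
`C(n-l, l-1) - C(n-l-1, l-2) = C(n-l-1, l-1)`. -/
theorem card_tuples_wrapping (n l : ℕ) (hl : 2 ≤ l) (hn : 2 * l ≤ n) :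
    Set.ncard {t : Fin l → Fin n |
        (∀ (j : ℕ) (h : j + 1 < l),
          (t ⟨j, by omega⟩ : ℕ) + 2 ≤ (t ⟨j + 1, h⟩ : ℕ)) ∧
        ((t ⟨l - 1, by omega⟩ : ℕ) + 1) + 2 > ((t ⟨0, by omega⟩ : ℕ) + 1) + n} =
      (n - l - 1).choose (l - 2) ∧
    (n - l).choose (l - 1) - (n - l - 1).choose (l - 2) = (n - l - 1).choose (l - 1) := by
  refine ⟨wrappingTuples.ncard_eq_choose hl (by omega), ?_⟩
  obtain ⟨m, hm⟩ : ∃ m, n - l = m + 1 := ⟨n - l - 1, by omega⟩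
  obtain ⟨k, rfl⟩ : ∃ k, l = k + 2 := ⟨l - 2, by omega⟩
  rw [hm, Nat.add_sub_cancel, show k + 2 - 1 = k + 1 by omega, Nat.add_sub_cancel,
    Nat.choose_succ_succ']
  omega
end
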